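/- If a nonempty word w over an alphabet A has maximal border ε (i.e. no nonempty proper prefix of w is also a suffix of w), then for every k ≥ 0, the language Count(w, k) of words containing exactly k occurrences of w as a contiguous subword equals [Count(w,0) · w]^k · Count(w,0), where · denotes language concatenation. -/

import Mathlib

/-- Number of occurrences of `w` as a contiguous subword (factor) of `v`. -/
def countOcc {α : Type*} [DecidableEq α] (w v : List α) : ℕ :=
  ((List.range (v.length + 1)).filter (fun i => decide (w <+: v.drop i))).length

/-- `Count w k`: the language of words containing exactly `k` occurrences of `w`
as a contiguous subword. -/
def Count {α : Type*} [DecidableEq α] (w : List α) (k : ℕ) : Language α :=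
  {v | countOcc w v = k}

/-!
An unbordered word cannot overlap itself: if `w` occurred at positions `i < j < i + |w|`, the
suffix of `w` starting at `j - i` would be a nonempty proper border. So in `v = u w t`, cut at
the first occurrence of `w`, every occurrence other than the displayed one lies in `t`, and
`|v|_w = |t|_w + 1`. This gives `Count(w, k+1) = Count(w, 0) · w · Count(w, k)`, and the theorem
follows by induction on `k`.
-/

-- The paper's "`w` has maximal border `ε`".
def Unbordered {α : Type*} (w : List α) : Prop :=
  ∀ u : List α, u <+: w → u <:+ w → u ≠ w → u = []

theorem Unbordered.not_prefix_drop {α : Type*} {w x : List α} (hw : Unbordered w)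
    (hx : w <+: x) {d : ℕ} (hd : 0 < d) (hdw : d < w.length) : ¬ w <+: x.drop d := by
  intro hxd
  have hpre : w.drop d <+: w :=
    List.prefix_of_prefix_length_le (hx.drop d) hxd (by simp)
  have hne : w.drop d ≠ w := fun h => by
    have := congrArg List.length h; simp only [List.length_drop] at this; omega
  have := congrArg List.length (hw _ hpre (List.drop_suffix d w) hne)
  simp only [List.length_drop, List.length_nil] at this
  omega

section

variable {α : Type*} [DecidableEq α]

theorem mem_count {w v : List α} {k : ℕ} : v ∈ Count w k ↔ countOcc w v = k := Iff.rfl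

theorem countOcc_nil (w : List α) : countOcc w [] = if w <+: [] then 1 else 0 := by
  by_cases h : w <+: [] <;> simp [countOcc, h]

theorem countOcc_cons (w : List α) (a : α) (v : List α) :
    countOcc w (a :: v) = countOcc w v + if w <+: a :: v then 1 else 0 := by
  by_cases h : w <+: a :: v <;>
    simp [countOcc, List.range_succ_eq_map (n := v.length + 1), h,
      List.filter_map, Function.comp_def]

theorem countOcc_pos_of_prefix_drop {w v : List α} {i : ℕ} (h : w <+: v.drop i) :
    0 < countOcc w v := by
  induction v generalizing i with
  | nil => simp_all [countOcc_nil]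
  | cons a v ih =>
    rw [countOcc_cons]
    cases i with
    | zero => simp_all
    | succ i => exact Nat.add_pos_left (ih h) _

theorem countOcc_append_of_forall_not_prefix {w u z : List α}
    (h : ∀ i < u.length, ¬ w <+: (u ++ z).drop i) : countOcc w (u ++ z) = countOcc w z := by
  induction u with
  | nil => rfl
  | cons a u ih =>
    rw [List.cons_append, countOcc_cons, if_neg (by simpa using h 0 (by simp)),
      ih fun i hi => h (i + 1) (by simpa using hi), add_zero]

theorem Unbordered.countOcc_append {w : List α} (hw : Unbordered w) (hne : w ≠ []) (t : List α) :
    countOcc w (w ++ t) = countOcc w t + 1 := by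
  obtain ⟨a, w', rfl⟩ := List.exists_cons_of_ne_nil hne
  have hocc : a :: w' <+: a :: w' ++ t := List.prefix_append _ _
  rw [List.cons_append, countOcc_cons, if_pos (by simp), countOcc_append_of_forall_not_prefix]
  intro i hi
  simpa using hw.not_prefix_drop hocc (d := i + 1) (by omega) (by simpa using hi)

theorem Unbordered.countOcc_append_append {w u : List α} (hw : Unbordered w) (hne : w ≠ [])
    (hu : countOcc w u = 0) (t : List α) :
    countOcc w (u ++ w ++ t) = countOcc w t + 1 := by
  have hocc : w <+: (u ++ w ++ t).drop u.length := by simp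
  rw [List.append_assoc, countOcc_append_of_forall_not_prefix, hw.countOcc_append hne]
  intro i hi hwi
  by_cases hin : i + w.length ≤ u.length
  · -- the occurrence at `i` lies inside `u`
    have : w <+: u.drop i :=
      List.prefix_of_prefix_length_le hwi (by simp [List.drop_append_of_le_length hi.le])
        (by simp; omega)
    exact (countOcc_pos_of_prefix_drop this).ne' hu
  · -- it overlaps the occurrence at `u.length`
    refine hw.not_prefix_drop hwi (d := u.length - i) (by omega) (by omega) ?_
    rw [List.drop_drop, Nat.add_sub_cancel' hi.le, ← List.append_assoc]
    exact hocc

theorem exists_eq_append_append_of_countOcc_ne_zero {w v : List α} (hne : w ≠ [])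
    (h : countOcc w v ≠ 0) : ∃ u t, v = u ++ w ++ t ∧ countOcc w u = 0 := by
  induction v with
  | nil => simp [countOcc_nil, hne] at h
  | cons a v ih =>
    by_cases hp : w <+: a :: v
    · obtain ⟨t, ht⟩ := hp
      exact ⟨[], t, by simp [ht], by simp [countOcc_nil, hne]⟩
    · rw [countOcc_cons, if_neg hp, add_zero] at h
      obtain ⟨u, t, rfl, hu⟩ := ih h
      refine ⟨a :: u, t, rfl, ?_⟩
      rw [countOcc_cons, hu, if_neg fun h => hp (h.trans (by simp [List.append_assoc]))]

theorem Unbordered.count_succ {w : List α} (hw : Unbordered w) (hne : w ≠ []) (k : ℕ) :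
    Count w (k + 1) = Count w 0 * {w} * Count w k := by
  ext v
  simp only [Language.mem_mul, mem_count]
  constructor
  · intro hv
    obtain ⟨u, t, rfl, hu⟩ := exists_eq_append_append_of_countOcc_ne_zero (v := v) hne (by omega)
    rw [hw.countOcc_append_append hne hu] at hv
    exact ⟨u ++ w, ⟨u, hu, w, rfl, rfl⟩, t, by omega, rfl⟩
  · rintro ⟨_, ⟨u, hu, _, rfl, rfl⟩, t, ht, rfl⟩
    rw [hw.countOcc_append_append hne hu, ht]

end

theorem stmt4 {α : Type*} [DecidableEq α] (w : List α) (hw : w ≠ [])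
    (hborder : ∀ u : List α, u <+: w → u <:+ w → u ≠ w → u = []) (k : ℕ) :
    Count w k = (Count w 0 * ({w} : Language α)) ^ k * Count w 0 := by
  induction k with
  | zero => rw [pow_zero, one_mul]
  | succ k ih =>
    rw [Unbordered.count_succ hborder hw, ih, pow_succ', mul_assoc (Count w 0 * {w})]
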